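/- arXiv:0907.2833 — 3 statements merged into one kernel-verified Lean document; each statement's English description precedes it below -/
import Mathlib

section
/- If U₁, U₂ are 2ⁿ×2ⁿ unitaries with D(U₁,U₂) ≤ δ, then for every n-qubit Pauli matrix σ_p, D(U₁σ_pU₁†, U₂σ_pU₂†) ≤ 2δ. -/
open Matrix Kronecker BigOperators

noncomputable def frob {m : Type*} [Fintype m] (A : Matrix m m ℂ) : ℝ :=
  Real.sqrt ((Aᴴ * A).trace.re)

noncomputable def pauli1 : Fin 4 → Matrix (Fin 2) (Fin 2) ℂ
  | 0 => !![1, 0; 0, 1]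
  | 1 => !![0, 1; 1, 0]
  | 2 => !![0, -Complex.I; Complex.I, 0]
  | 3 => !![1, 0; 0, -1]

noncomputable def pauli {n : ℕ} (p : Fin n → Fin 4) :
    Matrix (Fin n → Fin 2) (Fin n → Fin 2) ℂ :=
  Matrix.of fun i j => ∏ k, pauli1 (p k) (i k) (j k)

/-- The phase-invariant distance `D(A,B) = sqrt(1 - |tr(A Bᴴ)/2ⁿ|²)` on 2ⁿ×2ⁿ matrices. -/
noncomputable def Dn (n : ℕ) (A B : Matrix (Fin n → Fin 2) (Fin n → Fin 2) ℂ) : ℝ :=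
  Real.sqrt (1 - ‖(A * Bᴴ).trace / (2 : ℂ) ^ n‖ ^ 2)

/-- The distance `D⁺(A,B) = sqrt(1 - Re(tr(A Bᴴ)/2ⁿ))` on 2ⁿ×2ⁿ matrices. -/
noncomputable def DplusN (n : ℕ) (A B : Matrix (Fin n → Fin 2) (Fin n → Fin 2) ℂ) : ℝ :=
  Real.sqrt (1 - ((A * Bᴴ).trace / (2 : ℂ) ^ n).re)

/-! ### Auxiliary lemmas -/

attribute [local instance] Matrix.frobeniusNormedAddCommGroup

section FrobAux

variable {m : Type*} [Fintype m] [DecidableEq m]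

omit [DecidableEq m] in
lemma frob_norm_sq (A : Matrix m m ℂ) :
    ‖A‖ ^ 2 = ((Aᴴ * A).trace).re := by
  have h0 : (0:ℝ) ≤ ∑ i, ∑ j, ‖A i j‖ ^ (2:ℝ) := by positivity
  rw [Matrix.frobenius_norm_def, ← Real.rpow_natCast _ 2, ← Real.rpow_mul h0]
  norm_num
  rw [Matrix.trace]
  simp only [Matrix.diag_apply, Matrix.mul_apply, Matrix.conjTranspose_apply]
  rw [Complex.re_sum]
  rw [Finset.sum_comm]
  congr 1; ext i
  rw [Complex.re_sum]
  congr 1; ext j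
  rw [show (star (A j i)) = (starRingEnd ℂ) (A j i) from rfl, Complex.conj_mul']
  rw [← Complex.ofReal_pow, Complex.ofReal_re]

lemma frob_mul_right (X V : Matrix m m ℂ) (hV : V * Vᴴ = 1) : ‖X * V‖ = ‖X‖ := by
  have h : ‖X * V‖ ^ 2 = ‖X‖ ^ 2 := by
    rw [frob_norm_sq, frob_norm_sq, Matrix.conjTranspose_mul,
      show Vᴴ * Xᴴ * (X * V) = Vᴴ * (Xᴴ * X * V) by simp [Matrix.mul_assoc],
      Matrix.trace_mul_comm, Matrix.mul_assoc, hV, Matrix.mul_one]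
  calc ‖X * V‖ = Real.sqrt (‖X * V‖ ^ 2) := (Real.sqrt_sq (norm_nonneg _)).symm
    _ = Real.sqrt (‖X‖ ^ 2) := by rw [h]
    _ = ‖X‖ := Real.sqrt_sq (norm_nonneg _)

lemma frob_mul_left (V X : Matrix m m ℂ) (hV : Vᴴ * V = 1) : ‖V * X‖ = ‖X‖ := by
  have h : ‖V * X‖ ^ 2 = ‖X‖ ^ 2 := by
    rw [frob_norm_sq, frob_norm_sq, Matrix.conjTranspose_mul,
      show Xᴴ * Vᴴ * (V * X) = Xᴴ * (Vᴴ * V) * X by simp [Matrix.mul_assoc], hV,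
      Matrix.mul_one]
  calc ‖V * X‖ = Real.sqrt (‖V * X‖ ^ 2) := (Real.sqrt_sq (norm_nonneg _)).symm
    _ = Real.sqrt (‖X‖ ^ 2) := by rw [h]
    _ = ‖X‖ := Real.sqrt_sq (norm_nonneg _)

lemma norm_sub_sq_u (A B : Matrix m m ℂ) (hA : Aᴴ * A = 1) (hB : Bᴴ * B = 1) :
    ‖A - B‖ ^ 2 = 2 * (Fintype.card m : ℝ) - 2 * ((A * Bᴴ).trace).re := by
  rw [frob_norm_sq]
  have hexp : (A - B)ᴴ * (A - B) = Aᴴ * A - Aᴴ * B - Bᴴ * A + Bᴴ * B := by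
    rw [Matrix.conjTranspose_sub]; noncomm_ring
  rw [hexp, hA, hB]
  rw [Matrix.trace_add, Matrix.trace_sub, Matrix.trace_sub, Matrix.trace_one]
  have h1 : (Aᴴ * B).trace.re = ((A * Bᴴ).trace).re := by
    have h0 : (A * Bᴴ).trace = (Bᴴ * A).trace := Matrix.trace_mul_comm _ _
    rw [h0]
    have h2 : (Bᴴ * A) = (Aᴴ * B)ᴴ := by simp [Matrix.conjTranspose_mul]
    rw [h2, Matrix.trace_conjTranspose]
    simp
  have h3 : (Bᴴ * A).trace.re = ((A * Bᴴ).trace).re := by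
    rw [← Matrix.trace_mul_comm]
  simp only [Complex.add_re, Complex.sub_re, Complex.natCast_re, Complex.one_re]
  rw [h1, h3]
  ring

lemma smul_unitary (c : ℂ) (hc : ‖c‖ = 1) (B : Matrix m m ℂ)
    (hB : Bᴴ * B = 1) : (c • B)ᴴ * (c • B) = 1 := by
  rw [Matrix.conjTranspose_smul, Matrix.smul_mul, Matrix.mul_smul, smul_smul, hB]
  have : (starRingEnd ℂ) c * c = 1 := by
    rw [Complex.conj_mul']
    norm_cast
    simp [Complex.normSq_eq_norm_sq, hc]
  rw [show (star c : ℂ) = (starRingEnd ℂ) c from rfl, this, one_smul]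

lemma abs_trace_le (A B : Matrix m m ℂ) (hA : Aᴴ * A = 1) (hB : Bᴴ * B = 1) :
    ‖(A * Bᴴ).trace‖ ≤ (Fintype.card m : ℝ) := by
  by_cases hT : (A * Bᴴ).trace = 0
  · simp [hT]
  set T := (A * Bᴴ).trace with hTdef
  have hTa : (0:ℝ) < ‖T‖ := by
    simpa using (norm_pos_iff.mpr hT)
  set c : ℂ := T / (‖T‖ : ℂ) with hc
  have hcabs : ‖c‖ = 1 := by
    rw [hc, norm_div, Complex.norm_real, Real.norm_eq_abs, abs_of_pos hTa, div_self (ne_of_gt hTa)]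
  have hB' : (c • B)ᴴ * (c • B) = 1 := smul_unitary c hcabs B hB
  have htr : ((A * (c • B)ᴴ).trace).re = ‖T‖ := by
    rw [Matrix.conjTranspose_smul, Matrix.mul_smul, Matrix.trace_smul]
    have hstar : star c * T = (‖T‖ : ℂ) := by
      rw [show (star c : ℂ) = (starRingEnd ℂ) c from rfl]
      rw [hc, map_div₀, Complex.conj_ofReal]
      rw [div_mul_eq_mul_div, mul_comm, Complex.mul_conj]
      rw [Complex.normSq_eq_norm_sq]
      push_cast
      rw [sq, mul_div_assoc, div_self (by exact_mod_cast ne_of_gt hTa), mul_one]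
    rw [smul_eq_mul, ← hTdef, hstar, Complex.ofReal_re]
  have h0 : (0:ℝ) ≤ ‖A - c • B‖ ^ 2 := sq_nonneg _
  rw [norm_sub_sq_u A (c • B) hA hB', htr] at h0
  linarith

end FrobAux

lemma pauli1_unitary (q : Fin 4) : (pauli1 q)ᴴ * pauli1 q = 1 := by
  fin_cases q <;>
  · ext i j
    fin_cases i <;> fin_cases j <;>
      simp [pauli1, Matrix.mul_apply, Fin.sum_univ_two, Matrix.one_apply,
        Complex.ext_iff]

lemma pauli_unitary {n : ℕ} (p : Fin n → Fin 4) : (pauli p)ᴴ * pauli p = 1 := by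
  ext i j
  rw [Matrix.mul_apply]
  simp only [Matrix.conjTranspose_apply, pauli, Matrix.of_apply]
  have hsplit : ∀ m : Fin n → Fin 2,
      star (∏ k, pauli1 (p k) (m k) (i k)) * ∏ k, pauli1 (p k) (m k) (j k)
      = ∏ k, (star (pauli1 (p k) (m k) (i k)) * pauli1 (p k) (m k) (j k)) := by
    intro m
    rw [star_prod, ← Finset.prod_mul_distrib]
  simp_rw [hsplit]
  rw [← Fintype.piFinset_univ, ← Finset.prod_univ_sum
    (t := fun _ : Fin n => (Finset.univ : Finset (Fin 2)))
    (f := fun k b => star (pauli1 (p k) b (i k)) * pauli1 (p k) b (j k))]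
  have hk : ∀ k, (∑ x : Fin 2, star (pauli1 (p k) x (i k)) * pauli1 (p k) x (j k))
      = if i k = j k then 1 else 0 := by
    intro k
    have h := congrFun (congrFun (pauli1_unitary (p k)) (i k)) (j k)
    rw [Matrix.mul_apply] at h
    simp only [Matrix.conjTranspose_apply, Matrix.one_apply] at h
    exact h
  simp_rw [hk]
  by_cases hij : i = j
  · subst hij
    simp [Matrix.one_apply]
  · rw [Matrix.one_apply_ne hij]
    obtain ⟨k, hk2⟩ : ∃ k, i k ≠ j k := by
      by_contra h; push_neg at h; exact hij (funext h)
    exact Finset.prod_eq_zero (Finset.mem_univ k) (by simp [hk2])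

lemma conj_unitary {m : Type*} [Fintype m] [DecidableEq m]
    (U σ : Matrix m m ℂ) (hU : Uᴴ * U = 1) (hU' : U * Uᴴ = 1) (hσ : σᴴ * σ = 1) :
    (U * σ * Uᴴ)ᴴ * (U * σ * Uᴴ) = 1 := by
  rw [Matrix.conjTranspose_mul, Matrix.conjTranspose_mul,
    Matrix.conjTranspose_conjTranspose]
  calc U * (σᴴ * Uᴴ) * (U * σ * Uᴴ)
      = U * (σᴴ * ((Uᴴ * U) * (σ * Uᴴ))) := by simp [Matrix.mul_assoc]
    _ = U * (σᴴ * (σ * Uᴴ)) := by rw [hU, Matrix.one_mul]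
    _ = U * (σᴴ * σ * Uᴴ) := by rw [Matrix.mul_assoc]
    _ = U * Uᴴ := by rw [hσ, Matrix.one_mul]
    _ = 1 := hU'

lemma card_pow {n : ℕ} : (Fintype.card (Fin n → Fin 2) : ℝ) = 2 ^ n := by
  simp

/-- Core trace inequality: conjugating by close unitaries. -/
lemma core_trace_ineq {m : Type*} [Fintype m] [DecidableEq m]
    (U₁ U₂ σ : Matrix m m ℂ)
    (hU1 : U₁ᴴ * U₁ = 1) (hU2 : U₂ᴴ * U₂ = 1)
    (hσ : σᴴ * σ = 1) (hσ' : σ * σᴴ = 1)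
    (hT0 : (U₁ * U₂ᴴ).trace ≠ 0)
    (hA : (U₁ * σ * U₁ᴴ)ᴴ * (U₁ * σ * U₁ᴴ) = 1)
    (hB : (U₂ * σ * U₂ᴴ)ᴴ * (U₂ * σ * U₂ᴴ) = 1) :
    2 * (Fintype.card m : ℝ)
      - 2 * (((U₁ * σ * U₁ᴴ) * (U₂ * σ * U₂ᴴ)ᴴ).trace).re
      ≤ 4 * (2 * (Fintype.card m : ℝ) - 2 * ‖(U₁ * U₂ᴴ).trace‖) := by
  set A := U₁ * σ * U₁ᴴ with hAdef
  set B := U₂ * σ * U₂ᴴ with hBdef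
  set T := (U₁ * U₂ᴴ).trace with hTdef
  have hTa : (0:ℝ) < ‖T‖ := norm_pos_iff.mpr hT0
  set c : ℂ := T / (‖T‖ : ℂ) with hcdef
  have hcabs : ‖c‖ = 1 := by
    rw [hcdef, norm_div, Complex.norm_real, Real.norm_eq_abs, abs_of_pos hTa, div_self (ne_of_gt hTa)]
  have hccc : (starRingEnd ℂ) c * c = 1 := by
    rw [Complex.conj_mul']
    norm_cast
    simp [Complex.normSq_eq_norm_sq, hcabs]
  set W : Matrix m m ℂ := c • U₂ with hWdef
  have hW : Wᴴ * W = 1 := smul_unitary c hcabs U₂ hU2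
  have hBW : B = W * σ * Wᴴ := by
    rw [hWdef, Matrix.conjTranspose_smul, Matrix.smul_mul, Matrix.smul_mul,
      Matrix.mul_smul, smul_smul]
    rw [show (c * star c : ℂ) = (starRingEnd ℂ) c * c from mul_comm c _, hccc, one_smul]
  have hTW : ((U₁ * Wᴴ).trace).re = ‖T‖ := by
    rw [hWdef, Matrix.conjTranspose_smul, Matrix.mul_smul, Matrix.trace_smul]
    have hstar : star c * T = (‖T‖ : ℂ) := by
      rw [show (star c : ℂ) = (starRingEnd ℂ) c from rfl]
      rw [hcdef, map_div₀, Complex.conj_ofReal]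
      rw [div_mul_eq_mul_div, mul_comm, Complex.mul_conj]
      rw [Complex.normSq_eq_norm_sq]
      push_cast
      rw [sq, mul_div_assoc, div_self (by exact_mod_cast ne_of_gt hTa), mul_one]
    rw [smul_eq_mul, ← hTdef, hstar, Complex.ofReal_re]
  have decomp : A - B = (U₁ - W) * σ * U₁ᴴ + W * (σ * (U₁ - W)ᴴ) := by
    rw [hBW, Matrix.conjTranspose_sub, hAdef]
    noncomm_ring
  have hn1 : ‖(U₁ - W) * σ * U₁ᴴ‖ = ‖U₁ - W‖ := by
    rw [frob_mul_right _ (U₁ᴴ) (by rw [Matrix.conjTranspose_conjTranspose]; exact hU1),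
      frob_mul_right _ σ hσ']
  have hn2 : ‖W * (σ * (U₁ - W)ᴴ)‖ = ‖U₁ - W‖ := by
    rw [frob_mul_left W _ hW, frob_mul_left σ _ hσ,
      Matrix.frobenius_norm_conjTranspose]
  have tri : ‖A - B‖ ≤ 2 * ‖U₁ - W‖ := by
    rw [decomp]
    calc ‖(U₁ - W) * σ * U₁ᴴ + W * (σ * (U₁ - W)ᴴ)‖
        ≤ ‖(U₁ - W) * σ * U₁ᴴ‖ + ‖W * (σ * (U₁ - W)ᴴ)‖ := norm_add_le _ _
      _ = 2 * ‖U₁ - W‖ := by rw [hn1, hn2]; ring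
  have trisq : ‖A - B‖ ^ 2 ≤ 4 * ‖U₁ - W‖ ^ 2 := by
    calc ‖A - B‖ ^ 2 ≤ (2 * ‖U₁ - W‖) ^ 2 := pow_le_pow_left₀ (norm_nonneg _) tri 2
      _ = 4 * ‖U₁ - W‖ ^ 2 := by ring
  have eq1 : ‖A - B‖ ^ 2
      = 2 * (Fintype.card m : ℝ) - 2 * ((A * Bᴴ).trace).re :=
    norm_sub_sq_u A B hA hB
  have eq2 : ‖U₁ - W‖ ^ 2
      = 2 * (Fintype.card m : ℝ) - 2 * ‖T‖ := by
    rw [norm_sub_sq_u U₁ W hU1 hW, hTW]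
  rw [← eq1, ← eq2]
  linarith

set_option maxHeartbeats 400000 in
/-- If D(U₁,U₂) ≤ δ then D(U₁σ_pU₁†, U₂σ_pU₂†) ≤ 2δ for every n-qubit Pauli σ_p. -/
theorem close_unitaries_have_close_pauli_conjugations (n : ℕ) (δ : ℝ)
    (U₁ U₂ : Matrix (Fin n → Fin 2) (Fin n → Fin 2) ℂ)
    (h₁ : U₁ ∈ Matrix.unitaryGroup (Fin n → Fin 2) ℂ)
    (h₂ : U₂ ∈ Matrix.unitaryGroup (Fin n → Fin 2) ℂ)
    (hD : Dn n U₁ U₂ ≤ δ) :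
    ∀ p : Fin n → Fin 4,
      Dn n (U₁ * pauli p * U₁ᴴ) (U₂ * pauli p * U₂ᴴ) ≤ 2 * δ := by
  intro p
  have hδ0 : 0 ≤ δ := le_trans (Real.sqrt_nonneg _) hD
  rcases le_or_gt 1 (2 * δ) with hbig | hsmall
  · refine le_trans ?_ hbig
    rw [Dn]
    set x : ℝ := ‖((U₁ * pauli p * U₁ᴴ) * (U₂ * pauli p * U₂ᴴ)ᴴ).trace / (2:ℂ) ^ n‖
    have hx : 1 - x ^ 2 ≤ 1 := by nlinarith [sq_nonneg x]
    calc Real.sqrt (1 - x ^ 2) ≤ Real.sqrt 1 := Real.sqrt_le_sqrt hx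
      _ = 1 := Real.sqrt_one
  -- main case
  have hU1 : U₁ᴴ * U₁ = 1 := by
    have := h₁.1; rwa [Matrix.star_eq_conjTranspose] at this
  have hU1' : U₁ * U₁ᴴ = 1 := by
    have := h₁.2; rwa [Matrix.star_eq_conjTranspose] at this
  have hU2 : U₂ᴴ * U₂ = 1 := by
    have := h₂.1; rwa [Matrix.star_eq_conjTranspose] at this
  have hU2' : U₂ * U₂ᴴ = 1 := by
    have := h₂.2; rwa [Matrix.star_eq_conjTranspose] at this
  have hσ : (pauli p)ᴴ * pauli p = 1 := pauli_unitary p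
  have hσ' : pauli p * (pauli p)ᴴ = 1 := mul_eq_one_comm.mp hσ
  have hA : (U₁ * pauli p * U₁ᴴ)ᴴ * (U₁ * pauli p * U₁ᴴ) = 1 :=
    conj_unitary U₁ (pauli p) hU1 hU1' hσ
  have hB : (U₂ * pauli p * U₂ᴴ)ᴴ * (U₂ * pauli p * U₂ᴴ) = 1 :=
    conj_unitary U₂ (pauli p) hU2 hU2' hσ
  set T := (U₁ * U₂ᴴ).trace with hTdef
  set S := ((U₁ * pauli p * U₁ᴴ) * (U₂ * pauli p * U₂ᴴ)ᴴ).trace with hSdef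
  set N : ℝ := 2 ^ n with hNdef
  have hN0 : (0:ℝ) < N := by positivity
  have hcard : (Fintype.card (Fin n → Fin 2) : ℝ) = N := card_pow
  have habsT : ‖T‖ ≤ N := by
    have := abs_trace_le U₁ U₂ hU1 hU2
    rwa [hcard] at this
  have habsS : ‖S‖ ≤ N := by
    have := abs_trace_le _ _ hA hB
    rwa [hcard] at this
  set t : ℝ := ‖T‖ / N with htdef
  set a : ℝ := ‖S‖ / N with hadef
  have ht0 : 0 ≤ t := by positivity
  have ha0 : 0 ≤ a := by positivity
  have ht1 : t ≤ 1 := by rw [htdef]; exact (div_le_one hN0).mpr habsT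
  have ha1 : a ≤ 1 := by rw [hadef]; exact (div_le_one hN0).mpr habsS
  have habsdiv : ∀ z : ℂ, ‖z / (2:ℂ) ^ n‖ = ‖z‖ / N := by
    intro z
    rw [norm_div, norm_pow, Complex.norm_two, hNdef]
  have hDt : 1 - t ^ 2 ≤ δ ^ 2 := by
    rw [Dn, ← hTdef] at hD
    have h1 : ‖T / (2:ℂ) ^ n‖ = t := by rw [habsdiv, htdef]
    rw [h1] at hD
    rcases le_or_gt (1 - t ^ 2) 0 with h | h
    · nlinarith
    · nlinarith [Real.sq_sqrt h.le, Real.sqrt_nonneg (1 - t ^ 2), hD, hδ0]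
  have ht34 : (3:ℝ)/4 ≤ t := by nlinarith
  have hT0 : T ≠ 0 := by
    intro h
    rw [htdef, h] at ht34
    norm_num at ht34
  have E : 2 * N - 2 * S.re ≤ 4 * (2 * N - 2 * ‖T‖) := by
    have := core_trace_ineq U₁ U₂ (pauli p) hU1 hU2 hσ hσ' hT0 hA hB
    rwa [hcard, ← hTdef, ← hSdef] at this
  have hSre : S.re ≤ ‖S‖ := Complex.re_le_norm S
  have habsS' : ‖S‖ = a * N := by rw [hadef]; field_simp
  have htT' : ‖T‖ = t * N := by rw [htdef]; field_simp
  rw [Dn, ← hSdef, habsdiv, ← hadef]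
  clear_value T S N t a
  clear hTdef hSdef hA hB hσ hσ' hU1 hU1' hU2 hU2' h₁ h₂ hD hcard habsdiv hT0
  have hkey : 1 - a ≤ 4 * (1 - t) := by nlinarith [E, hSre, habsS', htT', hN0]
  have hfin : 1 - a ^ 2 ≤ 4 * δ ^ 2 := by
    have hge : 4 * t - 3 ≤ a := by linarith
    nlinarith [mul_nonneg (by linarith : (0:ℝ) ≤ a - (4*t-3))
      (by linarith : (0:ℝ) ≤ a + (4*t-3)), sq_nonneg (t - 1)]
  calc Real.sqrt (1 - a ^ 2)
      ≤ Real.sqrt ((2 * δ) ^ 2) := Real.sqrt_le_sqrt (by nlinarith)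
    _ = 2 * δ := Real.sqrt_sq (by linarith)
end

section
/- If U₁, U₂ are 2ⁿ×2ⁿ unitaries such that for all n-qubit Pauli matrices σ_p, D⁺(U₁σ_pU₁†, U₂σ_pU₂†) ≤ δ, then D(U₁,U₂) ≤ δ. -/
open Matrix Kronecker BigOperators

lemma pauli1_orth (j k i l : Fin 2) :
    (∑ a : Fin 4, pauli1 a j k * (starRingEnd ℂ) (pauli1 a i l)) =
      if j = i ∧ k = l then 2 else 0 := by
  fin_cases j <;> fin_cases k <;> fin_cases i <;> fin_cases l <;>
    simp [Fin.sum_univ_four, pauli1, Complex.ext_iff] <;> norm_num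

lemma pauli_orth {n : ℕ} (j k i l : Fin n → Fin 2) :
    (∑ p : Fin n → Fin 4, pauli p j k * (starRingEnd ℂ) (pauli p i l)) =
      if j = i ∧ k = l then (2 : ℂ) ^ n else 0 := by
  have : ∀ p : Fin n → Fin 4, pauli p j k * (starRingEnd ℂ) (pauli p i l)
      = ∏ m, pauli1 (p m) (j m) (k m) * (starRingEnd ℂ) (pauli1 (p m) (i m) (l m)) := by
    intro p
    simp [pauli, map_prod, Finset.prod_mul_distrib]
  simp_rw [this]
  have key := Finset.prod_univ_sum (κ := fun _ : Fin n => Fin 4) (t := fun _ => Finset.univ)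
    (f := fun m a => pauli1 a (j m) (k m) * (starRingEnd ℂ) (pauli1 a (i m) (l m)))
  rw [Fintype.piFinset_univ] at key
  rw [← key]
  have : ∀ m : Fin n, (∑ a : Fin 4, pauli1 a (j m) (k m) * (starRingEnd ℂ) (pauli1 a (i m) (l m)))
      = if j m = i m ∧ k m = l m then 2 else 0 := fun m => pauli1_orth _ _ _ _
  simp_rw [this]
  by_cases h : j = i ∧ k = l
  · obtain ⟨h1, h2⟩ := h
    simp [h1, h2, funext_iff.mp h1, funext_iff.mp h2]
  · rw [if_neg h]
    rcases Classical.em (∀ m, j m = i m ∧ k m = l m) with hall | hnot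
    · exact absurd ⟨funext fun m => (hall m).1, funext fun m => (hall m).2⟩ h
    · push_neg at hnot
      obtain ⟨m, hm⟩ := hnot
      refine Finset.prod_eq_zero (Finset.mem_univ m) ?_
      rw [if_neg (by tauto)]

lemma sum_swap5 {α β γ δ ε M : Type*} [AddCommMonoid M] [Fintype α] [Fintype β] [Fintype γ]
    [Fintype δ] [Fintype ε] (f : α → β → γ → δ → ε → M) :
    (∑ p : α, ∑ i : β, ∑ l : γ, ∑ k : δ, ∑ j : ε, f p i l k j) =
      ∑ i : β, ∑ l : γ, ∑ k : δ, ∑ j : ε, ∑ p : α, f p i l k j := by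
  rw [Finset.sum_comm]
  refine Finset.sum_congr rfl fun i _ => ?_
  rw [Finset.sum_comm]
  refine Finset.sum_congr rfl fun l _ => ?_
  rw [Finset.sum_comm]
  refine Finset.sum_congr rfl fun k _ => ?_
  rw [Finset.sum_comm]

lemma sum_trace_conj {n : ℕ} (W : Matrix (Fin n → Fin 2) (Fin n → Fin 2) ℂ) :
    (∑ p : Fin n → Fin 4, (W * pauli p * Wᴴ * (pauli p)ᴴ).trace) =
      (2 : ℂ) ^ n * (W.trace * (starRingEnd ℂ) W.trace) := by
  have expand : ∀ p : Fin n → Fin 4, (W * pauli p * Wᴴ * (pauli p)ᴴ).trace =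
      ∑ i, ∑ l, ∑ k, ∑ j, (W i j * (starRingEnd ℂ) (W l k)) *
        (pauli p j k * (starRingEnd ℂ) (pauli p i l)) := by
    intro p
    simp only [Matrix.trace, Matrix.diag, Matrix.mul_apply, Matrix.conjTranspose_apply,
      Finset.sum_mul, Complex.star_def]
    refine Finset.sum_congr rfl fun i _ => Finset.sum_congr rfl fun l _ =>
      Finset.sum_congr rfl fun k _ => Finset.sum_congr rfl fun j _ => by ring
  simp_rw [expand]
  rw [sum_swap5]
  simp_rw [← Finset.mul_sum, pauli_orth]
  simp only [mul_ite, mul_zero]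
  rw [show (W.trace * (starRingEnd ℂ) W.trace) = ∑ i, ∑ l, W i i * (starRingEnd ℂ) (W l l) by
    rw [Matrix.trace]; simp only [Matrix.diag, map_sum, Finset.sum_mul, Finset.mul_sum]
    exact Finset.sum_comm]
  rw [Finset.mul_sum]
  refine Finset.sum_congr rfl fun i _ => ?_
  rw [Finset.mul_sum]
  refine Finset.sum_congr rfl fun l _ => ?_
  rw [Finset.sum_eq_single l, Finset.sum_eq_single i]
  · simp; ring
  · intro b _ hb; simp [hb]
  · simp
  · intro b _ hb; simp [hb]
  · simp

/-- If D⁺(U₁σ_pU₁†, U₂σ_pU₂†) ≤ δ for all Paulis σ_p, then D(U₁,U₂) ≤ δ. -/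
theorem close_pauli_conjugations_implies_close (n : ℕ) (δ : ℝ)
    (U₁ U₂ : Matrix (Fin n → Fin 2) (Fin n → Fin 2) ℂ)
    (h₁ : U₁ ∈ Matrix.unitaryGroup (Fin n → Fin 2) ℂ)
    (h₂ : U₂ ∈ Matrix.unitaryGroup (Fin n → Fin 2) ℂ)
    (hD : ∀ p : Fin n → Fin 4,
      DplusN n (U₁ * pauli p * U₁ᴴ) (U₂ * pauli p * U₂ᴴ) ≤ δ) :
    Dn n U₁ U₂ ≤ δ := by
  have hδ : 0 ≤ δ := le_trans (Real.sqrt_nonneg _) (hD fun _ => 0)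
  have key : ∀ x : ℝ, Real.sqrt x ≤ δ → x ≤ δ ^ 2 := by
    intro x hx
    rcases le_or_gt x 0 with h | h
    · nlinarith
    · have h2 := Real.sq_sqrt h.le
      nlinarith [Real.sqrt_nonneg x]
  set T := U₂ᴴ * U₁ with hT
  have trace_eq : ∀ p : Fin n → Fin 4,
      ((U₁ * pauli p * U₁ᴴ) * (U₂ * pauli p * U₂ᴴ)ᴴ).trace =
        (T * pauli p * Tᴴ * (pauli p)ᴴ).trace := by
    intro p
    simp only [hT, Matrix.conjTranspose_mul, Matrix.conjTranspose_conjTranspose]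
    rw [Matrix.trace_mul_comm]
    simp only [Matrix.mul_assoc]
    rw [Matrix.trace_mul_comm]
    simp only [Matrix.mul_assoc]
    rw [Matrix.trace_mul_comm]
    simp only [Matrix.mul_assoc]
  simp only [DplusN] at hD
  -- per-p inequality
  have hp : ∀ p : Fin n → Fin 4,
      1 - ((T * pauli p * Tᴴ * (pauli p)ᴴ).trace / (2 : ℂ) ^ n).re ≤ δ ^ 2 := by
    intro p
    have := key _ (hD p)
    rwa [trace_eq p] at this
  have h2n : ((2 : ℂ) ^ n) ≠ 0 := pow_ne_zero _ two_ne_zero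
  have hsum : (∑ p : Fin n → Fin 4, ((T * pauli p * Tᴴ * (pauli p)ᴴ).trace / (2 : ℂ) ^ n))
      = T.trace * (starRingEnd ℂ) T.trace := by
    rw [← Finset.sum_div, sum_trace_conj, mul_comm, mul_div_assoc, div_self h2n, mul_one]
  have hre : (∑ p : Fin n → Fin 4,
      ((T * pauli p * Tᴴ * (pauli p)ᴴ).trace / (2 : ℂ) ^ n).re)
      = ‖T.trace‖ ^ 2 := by
    rw [← Complex.re_sum, hsum, Complex.mul_conj, Complex.sq_norm]
    simp
  have card4 : (Finset.univ : Finset (Fin n → Fin 4)).card = 4 ^ n := by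
    simp [Fintype.card_fun]
  have hineq : (4 : ℝ) ^ n - ‖T.trace‖ ^ 2 ≤ (4 : ℝ) ^ n * δ ^ 2 := by
    have := Finset.sum_le_sum (fun p (_ : p ∈ Finset.univ) => hp p)
    rw [Finset.sum_sub_distrib, Finset.sum_const, Finset.sum_const, card4, hre] at this
    simp only [nsmul_eq_mul, mul_one] at this
    push_cast at this
    linarith
  -- relate traces
  have htr : (U₁ * U₂ᴴ).trace = T.trace := Matrix.trace_mul_comm _ _
  rw [Dn, htr]
  have habs : ‖T.trace / (2 : ℂ) ^ n‖ = ‖T.trace‖ / 2 ^ n := by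
    rw [norm_div]
    norm_num
  rw [habs]
  have h4 : (0 : ℝ) < 4 ^ n := by positivity
  have h2 : (0 : ℝ) < 2 ^ n := by positivity
  have : 1 - (‖T.trace‖ / 2 ^ n) ^ 2 ≤ δ ^ 2 := by
    rw [div_pow]
    have h42 : ((2 : ℝ) ^ n) ^ 2 = 4 ^ n := by
      rw [← pow_mul, mul_comm, pow_mul]
      norm_num
    have h' := (div_le_div_iff_of_pos_right h4).mpr hineq
    rw [mul_div_cancel_left₀ _ h4.ne', sub_div, div_self h4.ne'] at h'
    rw [h42]
    exact h'
  calc Real.sqrt (1 - (‖T.trace‖ / 2 ^ n) ^ 2) ≤ Real.sqrt (δ ^ 2) :=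
        Real.sqrt_le_sqrt this
    _ = δ := Real.sqrt_sq hδ
end

section
/- If U₁, U₂ are 2ⁿ×2ⁿ unitaries such that D⁺(U₁σ_gU₁†, U₂σ_gU₂†) ≤ δ for all σ_g in the generating set G = {σ_{xᵢ}, σ_{zᵢ}}_{i=1}^{n}, then D⁺(U₁σ_pU₁†, U₂σ_pU₂†) ≤ 2nδ for every n-qubit Pauli σ_p. -/
open Matrix Kronecker BigOperators

/-- σ_x acting on qubit i (identity elsewhere). -/
noncomputable def sigmaX {n : ℕ} (i : Fin n) :
    Matrix (Fin n → Fin 2) (Fin n → Fin 2) ℂ :=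
  pauli (fun k => if k = i then (1 : Fin 4) else 0)

/-- σ_z acting on qubit i (identity elsewhere). -/
noncomputable def sigmaZ {n : ℕ} (i : Fin n) :
    Matrix (Fin n → Fin 2) (Fin n → Fin 2) ℂ :=
  pauli (fun k => if k = i then (3 : Fin 4) else 0)

namespace CloseAux

attribute [local instance] Matrix.frobeniusNormedAddCommGroup

variable {n : ℕ}

/-! ### Tensor products of one-qubit matrices -/

noncomputable def tensor (A : Fin n → Matrix (Fin 2) (Fin 2) ℂ) :
    Matrix (Fin n → Fin 2) (Fin n → Fin 2) ℂ :=
  Matrix.of fun i j => ∏ k, A k (i k) (j k)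

lemma tensor_apply (A : Fin n → Matrix (Fin 2) (Fin 2) ℂ) (i j) :
    tensor A i j = ∏ k, A k (i k) (j k) := rfl

lemma pauli_eq_tensor (p : Fin n → Fin 4) : pauli p = tensor (fun k => pauli1 (p k)) := rfl

lemma tensor_mul (A B : Fin n → Matrix (Fin 2) (Fin 2) ℂ) :
    tensor A * tensor B = tensor fun k => A k * B k := by
  ext i j
  simp only [Matrix.mul_apply, tensor_apply]
  rw [Fintype.prod_sum fun k a => A k (i k) a * B k a (j k)]
  exact Finset.sum_congr rfl fun m _ => Finset.prod_mul_distrib.symm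

lemma tensor_conjTranspose (A : Fin n → Matrix (Fin 2) (Fin 2) ℂ) :
    (tensor A)ᴴ = tensor fun k => (A k)ᴴ := by
  ext i j
  simp only [conjTranspose_apply, tensor_apply, star_prod]

lemma tensor_one : (tensor fun _ : Fin n => (1 : Matrix (Fin 2) (Fin 2) ℂ)) = 1 := by
  ext i j
  simp only [tensor_apply, Matrix.one_apply]
  by_cases h : i = j
  · subst h; simp
  · rw [if_neg h]
    obtain ⟨k, hk⟩ := Function.ne_iff.mp h
    exact Finset.prod_eq_zero (Finset.mem_univ k) (by simp [hk])

lemma tensor_smul (c : Fin n → ℂ) (A : Fin n → Matrix (Fin 2) (Fin 2) ℂ) :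
    (tensor fun k => c k • A k) = (∏ k, c k) • tensor A := by
  ext i j
  simp only [tensor_apply, Matrix.smul_apply, smul_eq_mul]
  exact Finset.prod_mul_distrib

/-! ### One-qubit Pauli facts -/

lemma pauli1_zero : pauli1 0 = 1 := by
  ext i j; fin_cases i <;> fin_cases j <;> simp [pauli1]

lemma pauli1_unitary (a : Fin 4) : (pauli1 a)ᴴ * pauli1 a = 1 := by
  fin_cases a <;>
    · ext i j
      fin_cases i <;> fin_cases j <;>
        simp [pauli1, Matrix.mul_apply, Fin.sum_univ_two, Matrix.one_apply,
          Matrix.conjTranspose_apply, Complex.ext_iff]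

noncomputable def xb : Fin 4 → Fin 4 := ![0, 1, 1, 0]
noncomputable def zb : Fin 4 → Fin 4 := ![0, 0, 3, 3]
noncomputable def ph : Fin 4 → ℂ := ![1, 1, Complex.I, 1]

lemma pauli1_decomp (a : Fin 4) : pauli1 a = ph a • (pauli1 (xb a) * pauli1 (zb a)) := by
  fin_cases a <;>
    · ext i j
      fin_cases i <;> fin_cases j <;>
        simp [pauli1, xb, zb, ph, Matrix.mul_apply, Fin.sum_univ_two, Complex.ext_iff]

lemma ph_star (a : Fin 4) : star (ph a) * ph a = 1 := by
  fin_cases a <;> simp [ph, Complex.ext_iff]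

lemma pauli_unitary (p : Fin n → Fin 4) :
    pauli p ∈ Matrix.unitaryGroup (Fin n → Fin 2) ℂ := by
  rw [Matrix.mem_unitaryGroup_iff', Matrix.star_eq_conjTranspose, pauli_eq_tensor,
    tensor_conjTranspose, tensor_mul]
  simp only [pauli1_unitary]
  exact tensor_one

/-! ### Properties of `DplusN` -/

lemma norm_sq_eq_trace (M : Matrix (Fin n → Fin 2) (Fin n → Fin 2) ℂ) :
    ‖M‖ ^ 2 = ((Mᴴ * M).trace).re := by
  have h1 : ((Mᴴ * M).trace).re = ∑ j, ∑ i, ‖M i j‖ ^ 2 := by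
    rw [Matrix.trace, Complex.re_sum]
    refine Finset.sum_congr rfl fun j _ => ?_
    rw [Matrix.diag_apply, Matrix.mul_apply, Complex.re_sum]
    refine Finset.sum_congr rfl fun i _ => ?_
    rw [Matrix.conjTranspose_apply, Complex.sq_norm, Complex.normSq_apply]
    simp [Complex.mul_re]
  have h2 : ‖M‖ ^ 2 = ∑ i, ∑ j, ‖M i j‖ ^ 2 := by
    rw [Matrix.frobenius_norm_def, ← Real.rpow_natCast (_ ^ (1/2:ℝ)) 2,
      ← Real.rpow_mul (by positivity)]
    norm_num
  rw [h1, h2, Finset.sum_comm]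

lemma DplusN_eq (A B : Matrix (Fin n → Fin 2) (Fin n → Fin 2) ℂ)
    (hA : A ∈ Matrix.unitaryGroup (Fin n → Fin 2) ℂ)
    (hB : B ∈ Matrix.unitaryGroup (Fin n → Fin 2) ℂ) :
    DplusN n A B = ‖A - B‖ / Real.sqrt (2 * 2 ^ n) := by
  have hA' : Aᴴ * A = 1 := Matrix.mem_unitaryGroup_iff'.mp hA
  have hB' : Bᴴ * B = 1 := Matrix.mem_unitaryGroup_iff'.mp hB
  have key : ‖A - B‖ ^ 2 = 2 * 2 ^ n - 2 * ((A * Bᴴ).trace).re := by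
    rw [norm_sq_eq_trace]
    have expand : (A - B)ᴴ * (A - B) = Aᴴ * A - Aᴴ * B - Bᴴ * A + Bᴴ * B := by
      rw [Matrix.conjTranspose_sub]; noncomm_ring
    have h1 : (Bᴴ * A).trace = (A * Bᴴ).trace := Matrix.trace_mul_comm _ _
    have h2 : (Aᴴ * B).trace = star ((Bᴴ * A).trace) := by
      rw [← Matrix.trace_conjTranspose, Matrix.conjTranspose_mul,
        Matrix.conjTranspose_conjTranspose]
    rw [expand, hA', hB', Matrix.trace_add, Matrix.trace_sub, Matrix.trace_sub,
      Matrix.trace_one, h2, h1]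
    simp only [Complex.add_re, Complex.sub_re, Complex.natCast_re, RCLike.star_def,
      Complex.conj_re]
    have : (Fintype.card (Fin n → Fin 2) : ℝ) = 2 ^ n := by simp
    rw [this]; ring
  have hre : ((A * Bᴴ).trace / (2:ℂ) ^ n).re = ((A * Bᴴ).trace).re / 2 ^ n := by
    rw [show ((2:ℂ) ^ n) = (((2:ℝ) ^ n : ℝ) : ℂ) by push_cast; ring, Complex.div_ofReal_re]
  have hx : (0:ℝ) ≤ 2 * 2 ^ n - 2 * ((A * Bᴴ).trace).re := key ▸ sq_nonneg _
  rw [DplusN, hre, ← Real.sqrt_sq (norm_nonneg (A - B)), key, ← Real.sqrt_div hx]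
  congr 1
  have h2n : ((2:ℝ) ^ n) ≠ 0 := by positivity
  field_simp

lemma Dplus_triangle (A B C : Matrix (Fin n → Fin 2) (Fin n → Fin 2) ℂ)
    (hA : A ∈ Matrix.unitaryGroup (Fin n → Fin 2) ℂ)
    (hB : B ∈ Matrix.unitaryGroup (Fin n → Fin 2) ℂ)
    (hC : C ∈ Matrix.unitaryGroup (Fin n → Fin 2) ℂ) :
    DplusN n A C ≤ DplusN n A B + DplusN n B C := by
  rw [DplusN_eq A C hA hC, DplusN_eq A B hA hB, DplusN_eq B C hB hC, ← add_div]
  have h : ‖A - C‖ ≤ ‖A - B‖ + ‖B - C‖ := by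
    have := dist_triangle A B C
    simpa [dist_eq_norm] using this
  exact div_le_div_of_nonneg_right h (by positivity) |>.trans_eq rfl

lemma Dplus_mul_right (A B V : Matrix (Fin n → Fin 2) (Fin n → Fin 2) ℂ)
    (hV : V * Vᴴ = 1) : DplusN n (A * V) (B * V) = DplusN n A B := by
  have h : (A * V) * (B * V)ᴴ = A * Bᴴ := by
    rw [Matrix.conjTranspose_mul]
    calc A * V * (Vᴴ * Bᴴ) = A * (V * Vᴴ) * Bᴴ := by simp only [Matrix.mul_assoc]
    _ = A * Bᴴ := by rw [hV, Matrix.mul_one]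
  unfold DplusN; rw [h]

lemma Dplus_mul_left (V A B : Matrix (Fin n → Fin 2) (Fin n → Fin 2) ℂ)
    (hV : Vᴴ * V = 1) : DplusN n (V * A) (V * B) = DplusN n A B := by
  have h : ((V * A) * (V * B)ᴴ).trace = (A * Bᴴ).trace := by
    rw [Matrix.conjTranspose_mul,
      show V * A * (Bᴴ * Vᴴ) = V * (A * (Bᴴ * Vᴴ)) from by rw [Matrix.mul_assoc],
      Matrix.trace_mul_comm,
      show A * (Bᴴ * Vᴴ) * V = A * Bᴴ * (Vᴴ * V) from by simp only [Matrix.mul_assoc],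
      hV, Matrix.mul_one]
  unfold DplusN; rw [h]

lemma Dplus_smul (c : ℂ) (hc : star c * c = 1)
    (A B : Matrix (Fin n → Fin 2) (Fin n → Fin 2) ℂ) :
    DplusN n (c • A) (c • B) = DplusN n A B := by
  have h : (c • A) * (c • B)ᴴ = A * Bᴴ := by
    rw [Matrix.conjTranspose_smul, Matrix.smul_mul, Matrix.mul_smul, smul_smul,
      show c * star c = 1 from by rw [mul_comm]; exact hc, one_smul]
  unfold DplusN; rw [h]

lemma Dplus_nonneg (A B : Matrix (Fin n → Fin 2) (Fin n → Fin 2) ℂ) :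
    0 ≤ DplusN n A B := Real.sqrt_nonneg _

lemma Dplus_one_one : DplusN n 1 1 = 0 := by
  unfold DplusN
  rw [Matrix.conjTranspose_one, Matrix.mul_one, Matrix.trace_one]
  have h : ((Fintype.card (Fin n → Fin 2) : ℂ) / (2:ℂ) ^ n) = 1 := by
    rw [div_eq_one_iff_eq (pow_ne_zero n two_ne_zero)]
    simp
  rw [h]
  simp

lemma conj_mem {U A : Matrix (Fin n → Fin 2) (Fin n → Fin 2) ℂ}
    (hU : U ∈ Matrix.unitaryGroup (Fin n → Fin 2) ℂ)
    (hA : A ∈ Matrix.unitaryGroup (Fin n → Fin 2) ℂ) :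
    U * A * Uᴴ ∈ Matrix.unitaryGroup (Fin n → Fin 2) ℂ := by
  have := mul_mem (mul_mem hU hA) (Unitary.star_mem hU)
  simpa [Matrix.star_eq_conjTranspose] using this

/-- The hybrid argument: conjugation distance is subadditive over products. -/
lemma hybrid (U₁ U₂ : Matrix (Fin n → Fin 2) (Fin n → Fin 2) ℂ)
    (h₁ : U₁ ∈ Matrix.unitaryGroup (Fin n → Fin 2) ℂ)
    (h₂ : U₂ ∈ Matrix.unitaryGroup (Fin n → Fin 2) ℂ)
    (A B : Matrix (Fin n → Fin 2) (Fin n → Fin 2) ℂ)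
    (hA : A ∈ Matrix.unitaryGroup (Fin n → Fin 2) ℂ)
    (hB : B ∈ Matrix.unitaryGroup (Fin n → Fin 2) ℂ) :
    DplusN n (U₁ * (A * B) * U₁ᴴ) (U₂ * (A * B) * U₂ᴴ)
      ≤ DplusN n (U₁ * A * U₁ᴴ) (U₂ * A * U₂ᴴ) + DplusN n (U₁ * B * U₁ᴴ) (U₂ * B * U₂ᴴ) := by
  have h₁' : U₁ᴴ * U₁ = 1 := Matrix.mem_unitaryGroup_iff'.mp h₁
  have h₂' : U₂ᴴ * U₂ = 1 := Matrix.mem_unitaryGroup_iff'.mp h₂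
  have e1 : U₁ * (A * B) * U₁ᴴ = (U₁ * A * U₁ᴴ) * (U₁ * B * U₁ᴴ) := by
    simp only [Matrix.mul_assoc]
    rw [show U₁ᴴ * (U₁ * (B * U₁ᴴ)) = B * U₁ᴴ from by
      rw [← Matrix.mul_assoc, h₁', Matrix.one_mul]]
  have e2 : U₂ * (A * B) * U₂ᴴ = (U₂ * A * U₂ᴴ) * (U₂ * B * U₂ᴴ) := by
    simp only [Matrix.mul_assoc]
    rw [show U₂ᴴ * (U₂ * (B * U₂ᴴ)) = B * U₂ᴴ from by
      rw [← Matrix.mul_assoc, h₂', Matrix.one_mul]]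
  have m1 : U₁ * (A * B) * U₁ᴴ ∈ Matrix.unitaryGroup (Fin n → Fin 2) ℂ :=
    conj_mem h₁ (mul_mem hA hB)
  have m2 : U₂ * (A * B) * U₂ᴴ ∈ Matrix.unitaryGroup (Fin n → Fin 2) ℂ :=
    conj_mem h₂ (mul_mem hA hB)
  have mM : (U₂ * A * U₂ᴴ) * (U₁ * B * U₁ᴴ) ∈ Matrix.unitaryGroup (Fin n → Fin 2) ℂ :=
    mul_mem (conj_mem h₂ hA) (conj_mem h₁ hB)
  have hW : (U₁ * B * U₁ᴴ) * (U₁ * B * U₁ᴴ)ᴴ = 1 := by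
    have := Matrix.mem_unitaryGroup_iff.mp (conj_mem h₁ hB)
    rwa [Matrix.star_eq_conjTranspose] at this
  have hY : (U₂ * A * U₂ᴴ)ᴴ * (U₂ * A * U₂ᴴ) = 1 := by
    have := Matrix.mem_unitaryGroup_iff'.mp (conj_mem h₂ hA)
    rwa [Matrix.star_eq_conjTranspose] at this
  calc DplusN n (U₁ * (A * B) * U₁ᴴ) (U₂ * (A * B) * U₂ᴴ)
      ≤ DplusN n (U₁ * (A * B) * U₁ᴴ) ((U₂ * A * U₂ᴴ) * (U₁ * B * U₁ᴴ))
        + DplusN n ((U₂ * A * U₂ᴴ) * (U₁ * B * U₁ᴴ)) (U₂ * (A * B) * U₂ᴴ) :=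
      Dplus_triangle _ _ _ m1 mM m2
    _ = DplusN n (U₁ * A * U₁ᴴ) (U₂ * A * U₂ᴴ) + DplusN n (U₁ * B * U₁ᴴ) (U₂ * B * U₂ᴴ) := by
      rw [e1, e2, Dplus_mul_right _ _ _ hW, Dplus_mul_left _ _ _ hY]

end CloseAux

open CloseAux in
set_option maxHeartbeats 1600000 in
/-- If D⁺(U₁σ_gU₁†, U₂σ_gU₂†) ≤ δ for all generators σ_g ∈ {σ_{xᵢ}, σ_{zᵢ}}, then
D⁺(U₁σ_pU₁†, U₂σ_pU₂†) ≤ 2nδ for every n-qubit Pauli σ_p. -/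
theorem close_on_generators_close_on_paulis (n : ℕ) (δ : ℝ)
    (U₁ U₂ : Matrix (Fin n → Fin 2) (Fin n → Fin 2) ℂ)
    (h₁ : U₁ ∈ Matrix.unitaryGroup (Fin n → Fin 2) ℂ)
    (h₂ : U₂ ∈ Matrix.unitaryGroup (Fin n → Fin 2) ℂ)
    (hX : ∀ i : Fin n,
      DplusN n (U₁ * sigmaX i * U₁ᴴ) (U₂ * sigmaX i * U₂ᴴ) ≤ δ)
    (hZ : ∀ i : Fin n,
      DplusN n (U₁ * sigmaZ i * U₁ᴴ) (U₂ * sigmaZ i * U₂ᴴ) ≤ δ) :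
    ∀ p : Fin n → Fin 4,
      DplusN n (U₁ * pauli p * U₁ᴴ) (U₂ * pauli p * U₂ᴴ) ≤ 2 * n * δ := by
  intro p
  classical
  have hU₁ : U₁ * U₁ᴴ = 1 := by
    have := Matrix.mem_unitaryGroup_iff.mp h₁
    rwa [Matrix.star_eq_conjTranspose] at this
  have hU₂ : U₂ * U₂ᴴ = 1 := by
    have := Matrix.mem_unitaryGroup_iff.mp h₂
    rwa [Matrix.star_eq_conjTranspose] at this
  -- the distance vanishes on the identity
  have base : ∀ v : Fin 4, (fun _ : Fin n => (0:Fin 4)) = (fun _ => 0) := fun _ => rfl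
  have pauli_zero : pauli (fun _ : Fin n => (0:Fin 4)) = 1 := by
    rw [pauli_eq_tensor]
    simp only [pauli1_zero]
    exact tensor_one
  -- generic single-type key lemma
  have key : ∀ (v : Fin 4), (∀ i : Fin n,
        DplusN n (U₁ * pauli (fun k => if k = i then v else 0) * U₁ᴴ)
                 (U₂ * pauli (fun k => if k = i then v else 0) * U₂ᴴ) ≤ δ) →
      ∀ s : Finset (Fin n),
        DplusN n (U₁ * pauli (fun k => if k ∈ s then v else 0) * U₁ᴴ)
                 (U₂ * pauli (fun k => if k ∈ s then v else 0) * U₂ᴴ) ≤ s.card * δ := by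
    intro v hv s
    induction s using Finset.induction_on with
    | empty =>
      have h0 : (fun k : Fin n => if k ∈ (∅ : Finset (Fin n)) then v else 0)
          = fun _ => (0:Fin 4) := by funext k; simp
      rw [h0, pauli_zero, Matrix.mul_one, Matrix.mul_one, hU₁, hU₂, Dplus_one_one]
      simp
    | @insert i s hi ih =>
      have hfun : (fun k : Fin n => pauli1 (if k = i then v else 0)
            * pauli1 (if k ∈ s then v else 0))
          = fun k => pauli1 (if k ∈ insert i s then v else 0) := by
        funext k
        by_cases hk : k = i
        · subst hk
          rw [if_pos rfl, if_pos (Finset.mem_insert_self k s), if_neg hi, pauli1_zero, mul_one]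
        · rw [if_neg hk]
          by_cases hks : k ∈ s
          · rw [if_pos hks, if_pos (Finset.mem_insert_of_mem hks), pauli1_zero, one_mul]
          · rw [if_neg hks, if_neg (by simp [hk, hks]), pauli1_zero, one_mul]
      have hins : pauli (fun k => if k ∈ insert i s then v else 0)
          = pauli (fun k => if k = i then v else 0) * pauli (fun k => if k ∈ s then v else 0) := by
        rw [pauli_eq_tensor, pauli_eq_tensor, pauli_eq_tensor, tensor_mul, hfun]
      rw [hins]
      calc DplusN n (U₁ * (pauli (fun k => if k = i then v else 0)
              * pauli (fun k => if k ∈ s then v else 0)) * U₁ᴴ)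
            (U₂ * (pauli (fun k => if k = i then v else 0)
              * pauli (fun k => if k ∈ s then v else 0)) * U₂ᴴ)
          ≤ DplusN n (U₁ * pauli (fun k => if k = i then v else 0) * U₁ᴴ)
              (U₂ * pauli (fun k => if k = i then v else 0) * U₂ᴴ)
            + DplusN n (U₁ * pauli (fun k => if k ∈ s then v else 0) * U₁ᴴ)
              (U₂ * pauli (fun k => if k ∈ s then v else 0) * U₂ᴴ) :=
          hybrid U₁ U₂ h₁ h₂ _ _ (pauli_unitary _) (pauli_unitary _)
        _ ≤ δ + s.card * δ := add_le_add (hv i) ih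
        _ = ((insert i s).card : ℝ) * δ := by
          rw [Finset.card_insert_of_notMem hi]; push_cast; ring
  have keyX := key 1 hX
  have keyZ := key 3 hZ
  -- decompose the Pauli into phase, X part and Z part
  have hxb : ∀ a : Fin 4, xb a = 0 ∨ xb a = 1 := by decide
  have hzb : ∀ a : Fin 4, zb a = 0 ∨ zb a = 3 := by decide
  set sX : Finset (Fin n) := Finset.univ.filter (fun k => xb (p k) = 1) with hsX
  set sZ : Finset (Fin n) := Finset.univ.filter (fun k => zb (p k) = 3) with hsZ
  have hxfun : (fun k : Fin n => if k ∈ sX then (1:Fin 4) else 0) = fun k => xb (p k) := by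
    funext k
    rcases hxb (p k) with h | h <;>
      simp [hsX, Finset.mem_filter, h]
  have hzfun : (fun k : Fin n => if k ∈ sZ then (3:Fin 4) else 0) = fun k => zb (p k) := by
    funext k
    rcases hzb (p k) with h | h <;>
      simp [hsZ, Finset.mem_filter, h]
  have hdec : pauli p = (∏ k, ph (p k)) •
      (pauli (fun k => xb (p k)) * pauli (fun k => zb (p k))) := by
    have hfun2 : (fun k : Fin n => ph (p k) • (pauli1 (xb (p k)) * pauli1 (zb (p k))))
        = fun k => pauli1 (p k) := funext fun k => (pauli1_decomp (p k)).symm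
    rw [pauli_eq_tensor p, ← hfun2, tensor_smul, pauli_eq_tensor, pauli_eq_tensor, tensor_mul]
  have hphase : star (∏ k, ph (p k)) * (∏ k, ph (p k)) = 1 := by
    rw [star_prod, ← Finset.prod_mul_distrib]
    calc ∏ k, star (ph (p k)) * ph (p k) = ∏ k : Fin n, (1:ℂ) :=
          Finset.prod_congr rfl fun k _ => ph_star (p k)
      _ = 1 := Finset.prod_const_one
  -- rewrite the distance using the decomposition
  have hrw : DplusN n (U₁ * pauli p * U₁ᴴ) (U₂ * pauli p * U₂ᴴ)
      = DplusN n (U₁ * (pauli (fun k => xb (p k)) * pauli (fun k => zb (p k))) * U₁ᴴ)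
               (U₂ * (pauli (fun k => xb (p k)) * pauli (fun k => zb (p k))) * U₂ᴴ) := by
    have hsmul : ∀ (U M : Matrix (Fin n → Fin 2) (Fin n → Fin 2) ℂ),
        U * ((∏ k, ph (p k)) • M) * Uᴴ = (∏ k, ph (p k)) • (U * M * Uᴴ) := by
      intro U M
      rw [Matrix.mul_smul, Matrix.smul_mul]
    rw [hdec, hsmul, hsmul]
    exact Dplus_smul _ hphase _ _
  have boundX : DplusN n (U₁ * pauli (fun k => xb (p k)) * U₁ᴴ)
      (U₂ * pauli (fun k => xb (p k)) * U₂ᴴ) ≤ sX.card * δ := by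
    rw [← hxfun]; exact keyX sX
  have boundZ : DplusN n (U₁ * pauli (fun k => zb (p k)) * U₁ᴴ)
      (U₂ * pauli (fun k => zb (p k)) * U₂ᴴ) ≤ sZ.card * δ := by
    rw [← hzfun]; exact keyZ sZ
  have main : DplusN n (U₁ * pauli p * U₁ᴴ) (U₂ * pauli p * U₂ᴴ)
      ≤ sX.card * δ + sZ.card * δ := by
    rw [hrw]
    exact le_trans (hybrid U₁ U₂ h₁ h₂ _ _ (pauli_unitary _) (pauli_unitary _))
      (add_le_add boundX boundZ)
  have hcX : sX.card ≤ n := by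
    simpa using Finset.card_le_univ sX
  have hcZ : sZ.card ≤ n := by
    simpa using Finset.card_le_univ sZ
  rcases Nat.eq_zero_or_pos n with h0 | hpos
  · subst h0
    have : sX.card = 0 := Nat.le_zero.mp hcX
    have hz0 : sZ.card = 0 := Nat.le_zero.mp hcZ
    rw [this, hz0] at main
    simpa using main
  · have hδ : 0 ≤ δ := le_trans (Dplus_nonneg _ _) (hX ⟨0, hpos⟩)
    refine le_trans main ?_
    have : (sX.card : ℝ) * δ + (sZ.card : ℝ) * δ ≤ (n : ℝ) * δ + (n : ℝ) * δ := by
      have hX' : (sX.card : ℝ) ≤ n := by exact_mod_cast hcX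
      have hZ' : (sZ.card : ℝ) ≤ n := by exact_mod_cast hcZ
      gcongr
    calc (sX.card : ℝ) * δ + (sZ.card : ℝ) * δ ≤ (n : ℝ) * δ + (n : ℝ) * δ := this
      _ = 2 * n * δ := by ring
end
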